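/- arXiv:2604.15928 — 2 statements merged into one kernel-verified Lean document; each statement's English description precedes it below -/
import Mathlib

section
/- Let F be a field of characteristic 2 and a, b, c, d ∈ F×. If [F²(a,b,c,d) : F²] ≤ 8, then the symbol {a,b,c,d}₂ is trivial in K₄(F)/2K₄(F); equivalently, the 4-fold bilinear Pfister form ⟨⟨a,b,c,d⟩⟩ is metabolic. -/
namespace Milnor

variable (F : Type*) [Field F]

/-- Relations defining the Milnor K-group `K_n(F)`: multiplicativity in each
slot and the Steinberg relation. -/
def rels (n : ℕ) : AddSubgroup (FreeAbelianGroup (Fin n → Fˣ)) :=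
  AddSubgroup.closure
    ({ x | ∃ (i : Fin n) (u v w : Fin n → Fˣ),
        (∀ j, j ≠ i → u j = v j ∧ u j = w j) ∧ w i = u i * v i ∧
        x = FreeAbelianGroup.of w - FreeAbelianGroup.of u - FreeAbelianGroup.of v } ∪
     { x | ∃ (i j : Fin n) (u : Fin n → Fˣ), i ≠ j ∧ (u i : F) + (u j : F) = 1 ∧
        x = FreeAbelianGroup.of u })

/-- The Milnor K-group `K_n(F)`. -/
def K (n : ℕ) := FreeAbelianGroup (Fin n → Fˣ) ⧸ rels F n

instance (n : ℕ) : AddCommGroup (K F n) :=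
  QuotientAddGroup.Quotient.addCommGroup _

/-- The subgroup `2^m K_n(F)` of `K_n(F)`. -/
def modSub (n m : ℕ) : AddSubgroup (K F n) :=
  AddSubgroup.closure { x | ∃ y : K F n, x = (2 ^ m) • y }

/-- The quotient `K_n(F)/2^m K_n(F)`. -/
def KMod (n m : ℕ) := K F n ⧸ modSub F n m

instance (n m : ℕ) : AddCommGroup (KMod F n m) :=
  QuotientAddGroup.Quotient.addCommGroup _

variable {F}

/-- The class of the symbol `{v 0, …, v (n-1)}` in `K_n(F)/2^m K_n(F)`. -/
def symbol {n : ℕ} (m : ℕ) (v : Fin n → Fˣ) : KMod F n m :=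
  QuotientAddGroup.mk (QuotientAddGroup.mk (FreeAbelianGroup.of v) : K F n)

open scoped Classical in
/-- `{a,b}` in `K₂(F)/2^m K₂(F)` for field elements, with junk value `0` if an
entry vanishes.  So `s2 1 a b` is `{a,b}₂` and `s2 2 a b` is `{a,b}₄`. -/
noncomputable def s2 (m : ℕ) (a b : F) : KMod F 2 m :=
  if h : a ≠ 0 ∧ b ≠ 0 then symbol m ![Units.mk0 a h.1, Units.mk0 b h.2] else 0

open scoped Classical in
/-- `{a,b,c,d}` in `K₄(F)/2^m K₄(F)` for field elements, junk value `0`. -/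
noncomputable def s4 (m : ℕ) (a b c d : F) : KMod F 4 m :=
  if h : a ≠ 0 ∧ b ≠ 0 ∧ c ≠ 0 ∧ d ≠ 0 then
    symbol m ![Units.mk0 a h.1, Units.mk0 b h.2.1, Units.mk0 c h.2.2.1, Units.mk0 d h.2.2.2]
  else 0

end Milnor

open Milnor

/-- The subfield `F²` of squares of a field of characteristic 2. -/
def sqSubfield (F : Type*) [Field F] : Subfield F :=
  Subfield.closure { x : F | ∃ y : F, x = y ^ 2 }


/-!
In `K_*(F)/2` a symbol is multiplicative in each entry, vanishes when two entries sum to `1`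
and, in characteristic 2, is alternating and kills squares. Since `t² ∈ F²` for every `t`,
each element of `F²(S, t)` has the form `p + q t` with `p, q ∈ F²(S)`; for `e = p + q t` the
Steinberg relation `{p/e, qt/e} = 0` expands to `{e, t} = {p, ⋯} + {q, ⋯}`. By induction on
`S`, a symbol vanishes as soon as one entry lies in `F²` adjoined the other entries. Otherwise
every entry doubles the degree, so `[F²(a₁, …, aₙ) : F²] = 2ⁿ`; here `8 < 16`.
-/

section SquareSubfield

variable {F : Type*} [Field F] [CharP F 2]

open IntermediateField

theorem mem_sqSubfield {x : F} : x ∈ sqSubfield F ↔ ∃ y : F, x = y ^ 2 := by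
  refine ⟨fun hx => ?_, fun ⟨y, hy⟩ => Subfield.subset_closure ⟨y, hy⟩⟩
  -- In characteristic 2 the squares already form a subfield: the image of Frobenius.
  have hle : sqSubfield F ≤ (frobenius F 2).fieldRange :=
    Subfield.closure_le.mpr fun _ ⟨y, hy⟩ => ⟨y, hy.symm⟩
  obtain ⟨y, hy⟩ := hle hx
  exact ⟨y, hy.symm⟩

theorem sq_mem_adjoin_sqSubfield (S : Set F) (t : F) : t ^ 2 ∈ adjoin (sqSubfield F) S :=
  IntermediateField.algebraMap_mem (adjoin (sqSubfield F) S)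
    ⟨t ^ 2, mem_sqSubfield.mpr ⟨t, rfl⟩⟩

theorem exists_add_mul_of_mem_adjoin_insert {S : Set F} {t x : F}
    (hx : x ∈ adjoin (sqSubfield F) (insert t S)) :
    ∃ p ∈ adjoin (sqSubfield F) S, ∃ q ∈ adjoin (sqSubfield F) S, x = p + q * t := by
  have h2 : (2 : F) = 0 := CharTwo.two_eq_zero
  have ht2 := sq_mem_adjoin_sqSubfield S t
  induction hx using adjoin_induction with
  | mem u hu =>
    rcases hu with rfl | hu
    · exact ⟨0, zero_mem _, 1, one_mem _, by ring⟩
    · exact ⟨u, subset_adjoin _ _ hu, 0, zero_mem _, by ring⟩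
  | algebraMap k => exact ⟨_, IntermediateField.algebraMap_mem _ k, 0, zero_mem _, by ring⟩
  | add u v _ _ ihu ihv =>
    obtain ⟨p, hp, q, hq, rfl⟩ := ihu
    obtain ⟨r, hr, s, hs, rfl⟩ := ihv
    exact ⟨p + r, add_mem hp hr, q + s, add_mem hq hs, by ring⟩
  | mul u v _ _ ihu ihv =>
    obtain ⟨p, hp, q, hq, rfl⟩ := ihu
    obtain ⟨r, hr, s, hs, rfl⟩ := ihv
    exact ⟨p * r + q * s * t ^ 2, add_mem (mul_mem hp hr) (mul_mem (mul_mem hq hs) ht2),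
      p * s + q * r, add_mem (mul_mem hp hs) (mul_mem hq hr), by ring⟩
  | inv u _ ihu =>
    obtain ⟨p, hp, q, hq, rfl⟩ := ihu
    -- `(p + q t)⁻¹ = (p + q t) / N` with the norm `N = (p + q t)² = p² + q² t²`.
    set N := (p + q * t) ^ 2
    have hN : N ∈ adjoin (sqSubfield F) S := by
      have hN' : N = p ^ 2 + q ^ 2 * t ^ 2 := by linear_combination (p * q * t) * h2
      rw [hN']
      exact add_mem (pow_mem hp 2) (mul_mem (pow_mem hq 2) ht2)
    refine ⟨p * N⁻¹, mul_mem hp (inv_mem hN), q * N⁻¹, mul_mem hq (inv_mem hN), ?_⟩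
    rcases eq_or_ne (p + q * t) 0 with h0 | h0
    · simp [N, h0]
    · simp only [N]
      field_simp

end SquareSubfield

section AdjoinInsert

open IntermediateField

variable {K F : Type*} [Field K] [Field F] [Algebra K F]

noncomputable def adjoinInsertMap (S : Set F) (t : F) :
    (adjoin K S × adjoin K S) →ₗ[K] adjoin K (insert t S) where
  toFun pq := ⟨pq.1 + pq.2 * t,
    add_mem (adjoin.mono _ _ _ (Set.subset_insert t S) pq.1.2)
      (mul_mem (adjoin.mono _ _ _ (Set.subset_insert t S) pq.2.2)
        (subset_adjoin _ _ (Set.mem_insert t S)))⟩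
  map_add' pq pq' := by
    ext
    simp only [Prod.fst_add, Prod.snd_add]
    push_cast
    ring
  map_smul' k pq := by
    ext
    simp only [Prod.smul_fst, Prod.smul_snd, RingHom.id_apply, IntermediateField.coe_smul,
      smul_add, smul_mul_assoc]

theorem adjoinInsertMap_injective {S : Set F} {t : F} (ht : t ∉ adjoin K S) :
    Function.Injective (adjoinInsertMap (K := K) S t) := by
  rw [injective_iff_map_eq_zero]
  rintro ⟨⟨p, hp⟩, ⟨q, hq⟩⟩ h
  have h0 : p + q * t = 0 := congrArg Subtype.val h
  obtain rfl : q = 0 := by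
    by_contra hq0
    refine ht ?_
    have : t = -(p / q) := by field_simp; linear_combination h0
    rw [this]
    exact neg_mem (div_mem hp hq)
  obtain rfl : p = 0 := by simpa using h0
  rfl

theorem adjoinInsertMap_surjective [CharP F 2] (S : Set F) (t : F) :
    Function.Surjective (adjoinInsertMap (K := sqSubfield F) S t) := by
  rintro ⟨x, hx⟩
  obtain ⟨p, hp, q, hq, rfl⟩ := exists_add_mul_of_mem_adjoin_insert hx
  exact ⟨(⟨p, hp⟩, ⟨q, hq⟩), rfl⟩

theorem finrank_adjoin_insert_sqSubfield [CharP F 2] {S : Set F} {t : F}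
    [FiniteDimensional (sqSubfield F) (adjoin (sqSubfield F) S)]
    (ht : t ∉ adjoin (sqSubfield F) S) :
    Module.finrank (sqSubfield F) (adjoin (sqSubfield F) (insert t S)) =
      2 * Module.finrank (sqSubfield F) (adjoin (sqSubfield F) S) := by
  rw [← (LinearEquiv.ofBijective _
    ⟨adjoinInsertMap_injective ht, adjoinInsertMap_surjective S t⟩).finrank_eq,
    Module.finrank_prod, two_mul]

end AdjoinInsert

namespace Milnor

open Function IntermediateField

variable {F : Type*} [Field F] {n m : ℕ}

theorem symbol_update_mul (v : Fin n → Fˣ) (i : Fin n) (x y : Fˣ) :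
    (symbol m (update v i (x * y)) : KMod F n m) =
      symbol m (update v i x) + symbol m (update v i y) := by
  have hrel : (QuotientAddGroup.mk (FreeAbelianGroup.of (update v i (x * y))) : K F n) =
      QuotientAddGroup.mk
        (FreeAbelianGroup.of (update v i x) + FreeAbelianGroup.of (update v i y)) := by
    rw [QuotientAddGroup.eq_iff_sub_mem]
    refine AddSubgroup.subset_closure (Or.inl
      ⟨i, update v i x, update v i y, update v i (x * y), fun j hj => ?_, by simp, by abel⟩)
    simp [update_of_ne hj]
  rw [symbol, hrel, QuotientAddGroup.mk_add]
  rfl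

theorem symbol_eq_zero_of_add_eq_one (v : Fin n → Fˣ) {i j : Fin n} (hij : i ≠ j)
    (h : (v i : F) + v j = 1) : (symbol m v : KMod F n m) = 0 := by
  have hrel : (QuotientAddGroup.mk (FreeAbelianGroup.of v) : K F n) = 0 :=
    (QuotientAddGroup.eq_zero_iff _).mpr
      (AddSubgroup.subset_closure (Or.inr ⟨i, j, v, hij, h, rfl⟩))
  simp only [symbol, hrel]
  rfl

theorem KMod.add_self_eq_zero (t : KMod F n 1) : t + t = 0 := by
  induction t using QuotientAddGroup.induction_on with
  | H y =>
    refine (QuotientAddGroup.eq_zero_iff (y + y)).mpr (AddSubgroup.subset_closure ⟨y, ?_⟩)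
    rw [pow_one, two_nsmul]

theorem symbol_eq_zero_of_sq (v : Fin n → Fˣ) {i : Fin n} {α : Fˣ} (h : v i = α * α) :
    (symbol 1 v : KMod F n 1) = 0 := by
  rw [← update_eq_self i v, h, symbol_update_mul]
  exact KMod.add_self_eq_zero _

structure IsSteinbergPairing {G : Type*} [AddCommGroup G] (φ : Fˣ → Fˣ → G) : Prop where
  map_mul_left : ∀ x x' y, φ (x * x') y = φ x y + φ x' y
  map_mul_right : ∀ x y y', φ x (y * y') = φ x y + φ x y'
  map_of_add_eq_one : ∀ x y : Fˣ, (x : F) + y = 1 → φ x y = 0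

def leftRadical {G : Type*} [AddCommGroup G] (φ : Fˣ → Fˣ → G) : Set F :=
  {x | ∀ u : Fˣ, (u : F) = x → ∀ y, φ u y = 0}

namespace IsSteinbergPairing

variable {G : Type*} [AddCommGroup G] {φ : Fˣ → Fˣ → G}

theorem map_one_left (hφ : IsSteinbergPairing φ) (y : Fˣ) : φ 1 y = 0 := by
  simpa using hφ.map_mul_left 1 1 y

theorem map_inv_left (hφ : IsSteinbergPairing φ) (x y : Fˣ) : φ x⁻¹ y = -φ x y := by
  rw [eq_neg_iff_add_eq_zero, ← hφ.map_mul_left, inv_mul_cancel, hφ.map_one_left]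

theorem map_self [CharP F 2] (hφ : IsSteinbergPairing φ) (x : Fˣ) : φ x x = 0 := by
  rcases eq_or_ne x⁻¹ 1 with hx | hx
  · rw [inv_eq_one.mp hx, hφ.map_one_left]
  -- `{x⁻¹, 1 + x⁻¹}` and `{x, (1 + x⁻¹) x}` are Steinberg relations in characteristic 2.
  have h2 : (2 : F) = 0 := CharTwo.two_eq_zero
  have h1 : (1 : F) + (x⁻¹ : Fˣ) ≠ 0 := fun h =>
    hx (Units.ext (by rw [Units.val_one]; linear_combination h - h2))
  set u := Units.mk0 _ h1
  have hu : φ x⁻¹ u = 0 := hφ.map_of_add_eq_one _ _ (by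
    simp only [u, Units.val_mk0]; linear_combination ((x⁻¹ : Fˣ) : F) * h2)
  have hux : φ x (u * x) = 0 := hφ.map_of_add_eq_one _ _ (by
    simp only [u, Units.val_mul, Units.val_mk0, Units.val_inv_eq_inv_val]
    field_simp
    linear_combination (x : F) * h2)
  have hxu : φ x u = 0 := by rw [← neg_neg (φ x u), ← hφ.map_inv_left, hu, neg_zero]
  rwa [hφ.map_mul_right, hxu, zero_add] at hux

theorem map_swap [CharP F 2] (hφ : IsSteinbergPairing φ) (x y : Fˣ) : φ y x = -φ x y := by
  have h := hφ.map_self (x * y)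
  rw [hφ.map_mul_left, hφ.map_mul_right, hφ.map_mul_right, hφ.map_self, hφ.map_self,
    zero_add, add_zero] at h
  exact eq_neg_of_add_eq_zero_right h

theorem map_eq_zero_of_eq_add_mul [CharP F 2] (hφ : IsSteinbergPairing φ) {p q : F}
    (hp : p ∈ leftRadical φ) (hq : q ∈ leftRadical φ) {e t : Fˣ} (he : (e : F) = p + q * t) :
    φ e t = 0 := by
  rcases eq_or_ne q 0 with rfl | hq0
  · exact hp e (by simpa using he) t
  rcases eq_or_ne p 0 with rfl | hp0
  · have heq : e = Units.mk0 q hq0 * t := Units.ext (by simpa using he)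
    rw [heq, hφ.map_mul_left, hq _ rfl, hφ.map_self, add_zero]
  -- The Steinberg relation `{p/e, qt/e} = 0` expands to `{e, t} = 0`.
  set P := Units.mk0 p hp0
  set Q := Units.mk0 q hq0
  have hst : φ (P * e⁻¹) (Q * t * e⁻¹) = 0 := hφ.map_of_add_eq_one _ _ (by
    simp only [P, Q, Units.val_mul, Units.val_mk0, Units.val_inv_eq_inv_val]
    field_simp
    exact he.symm)
  have hQe : φ e Q = 0 := by rw [← neg_eq_zero, ← hφ.map_swap, hq Q rfl]
  rwa [hφ.map_mul_left, hp P rfl, zero_add, hφ.map_mul_right, hφ.map_mul_right,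
    hφ.map_self, add_zero, hφ.map_inv_left, hφ.map_inv_left, hQe, neg_zero, zero_add,
    neg_eq_zero] at hst

end IsSteinbergPairing

def slotPairing (m : ℕ) (v : Fin n → Fˣ) (i j : Fin n) : Fˣ → Fˣ → KMod F n m :=
  fun x y => symbol m (update (update v i x) j y)

theorem isSteinbergPairing_slotPairing (v : Fin n → Fˣ) {i j : Fin n} (hij : i ≠ j) :
    IsSteinbergPairing (slotPairing m v i j) where
  map_mul_left x x' y := by
    simp only [slotPairing, ← update_comm hij.symm, symbol_update_mul]
  map_mul_right x y y' := symbol_update_mul _ _ _ _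
  map_of_add_eq_one x y h := symbol_eq_zero_of_add_eq_one _ hij (by
    simpa [update_of_ne hij] using h)

section CharTwo

variable [CharP F 2]

theorem symbol_eq_zero_of_mem_adjoin (v : Fin n → Fˣ) {i : Fin n} {J : Finset (Fin n)}
    (hiJ : i ∉ J) (h : (v i : F) ∈ adjoin (sqSubfield F) ((fun j => (v j : F)) '' J)) :
    (symbol 1 v : KMod F n 1) = 0 := by
  induction J using Finset.induction_on generalizing v with
  | empty =>
    simp only [Finset.coe_empty, Set.image_empty, adjoin_empty, mem_bot] at h
    obtain ⟨⟨_, hy⟩, hyv⟩ := h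
    obtain ⟨α, rfl⟩ := mem_sqSubfield.mp hy
    have hvi : (v i : F) = α * α := hyv.symm.trans (sq α)
    have hα : α ≠ 0 := by rintro rfl; simp at hvi
    exact symbol_eq_zero_of_sq v (α := Units.mk0 α hα) (Units.ext hvi)
  | insert j J hjJ ih =>
    obtain ⟨hij, hiJ⟩ := not_or.mp (Finset.mem_insert.not.mp hiJ)
    rw [Finset.coe_insert, Set.image_insert_eq] at h
    obtain ⟨p, hp, q, hq, hpq⟩ := exists_add_mul_of_mem_adjoin_insert h
    -- The induction hypothesis applies whatever slots `i, j ∉ J` hold.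
    have hrad : ∀ x ∈ adjoin (sqSubfield F) ((fun k => (v k : F)) '' J),
        x ∈ leftRadical (slotPairing 1 v i j) := by
      rintro x hx u rfl z
      refine ih _ hiJ ?_
      have himage : (fun k => (update (update v i u) j z k : F)) '' J =
          (fun k => (v k : F)) '' J :=
        Set.image_congr fun k hk => by
          rw [update_of_ne (ne_of_mem_of_not_mem hk hjJ),
            update_of_ne (ne_of_mem_of_not_mem hk hiJ)]
      rwa [himage, update_of_ne hij, update_self]
    have := (isSteinbergPairing_slotPairing v hij).map_eq_zero_of_eq_add_mul
      (hrad p hp) (hrad q hq) hpq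
    rwa [slotPairing, update_eq_self, update_eq_self] at this

theorem symbol_eq_zero_of_finrank_lt (v : Fin n → Fˣ)
    (h : Module.finrank (sqSubfield F)
      (adjoin (sqSubfield F) (Set.range fun j => (v j : F))) < 2 ^ n) :
    (symbol 1 v : KMod F n 1) = 0 := by
  by_contra hv
  -- Otherwise no entry lies in the field generated over `F²` by the earlier ones,
  -- so the degree doubles with each entry.
  have hfinrank : ∀ k ≤ n, Module.finrank (sqSubfield F)
      (adjoin (sqSubfield F) ((fun j => (v j : F)) '' {j | (j : ℕ) < k})) = 2 ^ k := by
    intro k hk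
    induction k with
    | zero => simp
    | succ k ih =>
      have hkn : k < n := hk
      set j : Fin n := ⟨k, hkn⟩
      have hinsert : {i : Fin n | (i : ℕ) < k + 1} = insert j {i : Fin n | (i : ℕ) < k} := by
        ext i; simp [j, Fin.ext_iff]; omega
      have hIio : {i : Fin n | (i : ℕ) < k} = ↑(Finset.Iio j) := by
        ext i; simp [j, Fin.lt_def]
      have hj : (v j : F) ∉ adjoin (sqSubfield F) ((fun i => (v i : F)) '' {i | (i : ℕ) < k}) :=
        fun hmem => hv (symbol_eq_zero_of_mem_adjoin v Finset.notMem_Iio_self (hIio ▸ hmem))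
      have := Module.finite_of_finrank_pos ((ih hkn.le).symm ▸ pow_pos two_pos k)
      rw [hinsert, Set.image_insert_eq, finrank_adjoin_insert_sqSubfield hj, ih hkn.le, pow_succ,
        mul_comm]
  have hrange : (fun j => (v j : F)) '' {j | (j : ℕ) < n} = Set.range fun j => (v j : F) := by
    simp
  rw [← hrange, hfinrank n le_rfl] at h
  exact lt_irrefl _ h

end CharTwo

end Milnor

set_option synthInstance.maxHeartbeats 1000000 in
/-- if `[F²(a,b,c,d) : F²] ≤ 8`, then `{a,b,c,d}₂ = 0` in
`K₄(F)/2K₄(F)`. -/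
theorem stmt5 (F : Type*) [Field F] [CharP F 2] (a b c d : F)
    (ha : a ≠ 0) (hb : b ≠ 0) (hc : c ≠ 0) (hd : d ≠ 0)
    (hdeg : Module.finrank (sqSubfield F)
      (IntermediateField.adjoin (sqSubfield F) ({a, b, c, d} : Set F)) ≤ 8) :
    s4 1 a b c d = (0 : KMod F 4 1) := by
  rw [s4, dif_pos ⟨ha, hb, hc, hd⟩]
  apply symbol_eq_zero_of_finrank_lt
  have hrange : (Set.range fun j => ((![Units.mk0 a ha, Units.mk0 b hb, Units.mk0 c hc,
      Units.mk0 d hd] j : Fˣ) : F)) = {a, b, c, d} := by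
    ext x; simp [Fin.exists_fin_succ, eq_comm]
  rw [hrange]
  omega
end

section
/- Let F be a field of characteristic 2. Suppose a, b, c, d, a', b', c', d' ∈ F× satisfy {a,b}₂ = {a',b'}₂ ≠ 0 and {c,d}₂ = {c',d'}₂ ≠ 0 in K₂(F)/2K₂(F). Then F²(a,b) = F²(a',b') and F²(c,d) = F²(c',d'), hence F²(a,b,c,d) = F²(a',b',c',d'). -/
open Milnor

/-- The subfield `F²(S)` generated by the squares together with `S`. -/
def sqAdjoin (F : Type*) [Field F] (S : Set F) : Subfield F :=
  Subfield.closure ({ x : F | ∃ y : F, x = y ^ 2 } ∪ S)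

/-!
Write `dlog D u = D u / u` for a derivation `D` of `F`. Two derivations `D₁, D₂` give a
homomorphism `K₂(F)/2 → F`, `{u, v} ↦ dlog D₁ u · dlog D₂ v - dlog D₂ u · dlog D₁ v`: the
Steinberg relation holds because `D (1 - u) = -D u`, and `2 = 0` in `F`.

Suppose `{a, b} ≠ 0`. Then `b ∉ F²(a) = F² + F² a`, whose elements `s² + t² a` are norms from
`F(√a)`. If moreover `a ∉ F²(a', b')`, take `D₁` vanishing on `F²(a', b')` with `D₁ a = 1` and
`D₂` vanishing on `F²(a)` with `D₂ b = 1`: the homomorphism sends `{a, b}` to `1 / (a b)` but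
`{a', b'}` to `0`, so `{a, b} ≠ {a', b'}`. Such derivations exist because a subfield `M ⊇ F²`
maximal among those avoiding `a` satisfies `F = M ⊕ M a`, and in characteristic 2 the
coefficient of `a` is a derivation.
-/

namespace Milnor

variable {F : Type*} [Field F]

theorem symbol_eq_add_of_mem_rels {n m : ℕ} {u v w : Fin n → Fˣ}
    (h : FreeAbelianGroup.of w - FreeAbelianGroup.of u - FreeAbelianGroup.of v ∈ rels F n) :
    symbol m w = symbol m u + symbol m v := by
  have hK : (QuotientAddGroup.mk (FreeAbelianGroup.of w) : K F n) =
      QuotientAddGroup.mk (FreeAbelianGroup.of u) + QuotientAddGroup.mk (FreeAbelianGroup.of v) :=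
    QuotientAddGroup.eq_iff_sub_mem.mpr (by rwa [sub_add_eq_sub_sub])
  rw [symbol, hK]
  rfl

theorem symbol_mul_left (m : ℕ) (u u' v : Fˣ) :
    symbol m ![u * u', v] = symbol m ![u, v] + symbol m ![u', v] := by
  refine symbol_eq_add_of_mem_rels (AddSubgroup.subset_closure (Or.inl
    ⟨0, ![u, v], ![u', v], ![u * u', v], fun j hj => ?_, rfl, rfl⟩))
  fin_cases j <;> simp_all

theorem symbol_mul_right (m : ℕ) (u v v' : Fˣ) :
    symbol m ![u, v * v'] = symbol m ![u, v] + symbol m ![u, v'] := by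
  refine symbol_eq_add_of_mem_rels (AddSubgroup.subset_closure (Or.inl
    ⟨1, ![u, v], ![u, v'], ![u, v * v'], fun j hj => ?_, rfl, rfl⟩))
  fin_cases j <;> simp_all

theorem symbol_eq_zero_of_add_eq_one_s10 (m : ℕ) {u v : Fˣ} (h : (u : F) + v = 1) :
    symbol m ![u, v] = 0 := by
  have hK : (QuotientAddGroup.mk (FreeAbelianGroup.of ![u, v]) : K F 2) = 0 :=
    (QuotientAddGroup.eq_zero_iff _).mpr
      (AddSubgroup.subset_closure (Or.inr ⟨0, 1, ![u, v], by decide, h, rfl⟩))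
  rw [symbol, hK]
  rfl

theorem symbol_one_left (m : ℕ) (v : Fˣ) : symbol m ![1, v] = 0 := by
  simpa using symbol_mul_left m 1 1 v

theorem symbol_one_right (m : ℕ) (u : Fˣ) : symbol m ![u, 1] = 0 := by
  simpa using symbol_mul_right m u 1 1

theorem symbol_inv_left (m : ℕ) (u v : Fˣ) : symbol m ![u⁻¹, v] = -symbol m ![u, v] := by
  rw [eq_neg_iff_add_eq_zero, ← symbol_mul_left, inv_mul_cancel, symbol_one_left]

theorem symbol_inv_right (m : ℕ) (u v : Fˣ) : symbol m ![u, v⁻¹] = -symbol m ![u, v] := by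
  rw [eq_neg_iff_add_eq_zero, ← symbol_mul_right, inv_mul_cancel, symbol_one_right]

/-- In characteristic 2, `-u = u`, so this is the relation `{u, -u} = 0`. -/
theorem symbol_self [CharP F 2] (m : ℕ) (u : Fˣ) : symbol m ![u, u] = 0 := by
  by_cases hu : u = 1
  · rw [hu, symbol_one_left]
  have hw : (u : F) + 1 ≠ 0 := by
    rwa [Ne, CharTwo.add_eq_zero, Units.val_eq_one]
  set w := Units.mk0 _ hw
  have huw : symbol m ![u, w] = 0 :=
    symbol_eq_zero_of_add_eq_one_s10 m (CharTwo.add_cancel_left (u : F) 1)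
  have huw' : symbol m ![u⁻¹, u⁻¹ * w] = 0 := by
    refine symbol_eq_zero_of_add_eq_one_s10 m ?_
    simp only [w, Units.val_mul, Units.val_inv_eq_inv_val, Units.val_mk0]
    rw [mul_add, inv_mul_cancel₀ u.ne_zero, mul_one, add_comm 1, CharTwo.add_cancel_left]
  rwa [symbol_mul_right, symbol_inv_left, symbol_inv_right, neg_neg, symbol_inv_left, huw,
    neg_zero, add_zero] at huw'

theorem symbol_swap [CharP F 2] (m : ℕ) (u v : Fˣ) :
    symbol m ![v, u] = -symbol m ![u, v] := by
  have h := symbol_self m (u * v)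
  rw [symbol_mul_left, symbol_mul_right, symbol_mul_right, symbol_self, symbol_self, zero_add,
    add_zero] at h
  exact eq_neg_of_add_eq_zero_right h

theorem KMod.add_self {n : ℕ} (x : KMod F n 1) : x + x = 0 := by
  induction x using QuotientAddGroup.induction_on with | H y => ?_
  show (QuotientAddGroup.mk (y + y) : K F n ⧸ modSub F n 1) = 0
  rw [QuotientAddGroup.eq_zero_iff, ← two_nsmul]
  exact AddSubgroup.subset_closure ⟨y, by rw [pow_one]⟩

theorem KMod.neg_eq {n : ℕ} (x : KMod F n 1) : -x = x :=
  neg_eq_of_add_eq_zero_left (KMod.add_self x)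

theorem s2_of_ne_zero {m : ℕ} {a b : F} (ha : a ≠ 0) (hb : b ≠ 0) :
    s2 m a b = symbol m ![Units.mk0 a ha, Units.mk0 b hb] :=
  dif_pos ⟨ha, hb⟩

theorem ne_zero_of_s2_ne_zero {m : ℕ} {a b : F} (h : s2 m a b ≠ 0) : a ≠ 0 ∧ b ≠ 0 := by
  by_contra hab
  exact h (dif_neg hab)

theorem symbol_mul_self_mul_left (u v w : Fˣ) : symbol 1 ![w * w * u, v] = symbol 1 ![u, v] := by
  rw [symbol_mul_left, symbol_mul_left, KMod.add_self, zero_add]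

theorem symbol_mul_self_mul_right (u v w : Fˣ) :
    symbol 1 ![u, w * w * v] = symbol 1 ![u, v] := by
  rw [symbol_mul_right, symbol_mul_right, KMod.add_self, zero_add]

theorem exists_addMonoidHom_symbol {A : Type*} [AddCommGroup A] (f : Fˣ → Fˣ → A)
    (hmul_left : ∀ u u' v, f (u * u') v = f u v + f u' v)
    (hmul_right : ∀ u v v', f u (v * v') = f u v + f u v')
    (hsteinberg : ∀ u v : Fˣ, (u : F) + v = 1 → f u v = 0) (htwo : ∀ x : A, x + x = 0) :
    ∃ ψ : KMod F 2 1 →+ A, ∀ u v, ψ (symbol 1 ![u, v]) = f u v := by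
  let φ : FreeAbelianGroup (Fin 2 → Fˣ) →+ A := FreeAbelianGroup.lift fun w => f (w 0) (w 1)
  have hrels : rels F 2 ≤ φ.ker := by
    rw [rels, AddSubgroup.closure_le]
    rintro x (⟨i, u, v, w, hj, hi, rfl⟩ | ⟨i, j, u, hij, h1, rfl⟩)
    · simp only [SetLike.mem_coe, AddMonoidHom.mem_ker, map_sub, φ, FreeAbelianGroup.lift_apply_of]
      fin_cases i
      · obtain ⟨e1, e2⟩ := hj 1 (by decide)
        simp only [Fin.zero_eta] at hi
        rw [hi, ← e2, ← e1, hmul_left, sub_sub, sub_self]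
      · obtain ⟨e1, e2⟩ := hj 0 (by decide)
        simp only [Fin.mk_one] at hi
        rw [hi, ← e2, ← e1, hmul_right, sub_sub, sub_self]
    · simp only [SetLike.mem_coe, AddMonoidHom.mem_ker, φ, FreeAbelianGroup.lift_apply_of]
      fin_cases i <;> fin_cases j
      all_goals first
        | exact absurd rfl hij
        | exact hsteinberg _ _ h1
        | exact hsteinberg _ _ ((add_comm _ _).trans h1)
  let ψK : K F 2 →+ A := QuotientAddGroup.lift _ φ hrels
  have hmod : modSub F 2 1 ≤ ψK.ker := by
    rw [modSub, AddSubgroup.closure_le]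
    rintro _ ⟨y, rfl⟩
    rw [SetLike.mem_coe, AddMonoidHom.mem_ker, map_nsmul, pow_one, two_nsmul, htwo]
  refine ⟨QuotientAddGroup.lift _ ψK hmod, fun u v => ?_⟩
  show φ (FreeAbelianGroup.of ![u, v]) = f u v
  exact FreeAbelianGroup.lift_apply_of _ _

section CharTwo

variable [CharP F 2]

theorem s2_comm (a b : F) : s2 1 b a = s2 1 a b := by
  by_cases h : a ≠ 0 ∧ b ≠ 0
  · rw [s2_of_ne_zero h.2 h.1, s2_of_ne_zero h.1 h.2, symbol_swap, KMod.neg_eq]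
  · rw [s2, s2, dif_neg h, dif_neg (by tauto)]

theorem s2_eq_zero_of_eq_sq_add_sq_mul {a b : F} (s t : F) (h : b = s ^ 2 + t ^ 2 * a) :
    s2 1 a b = 0 := by
  by_cases hab : a ≠ 0 ∧ b ≠ 0
  swap
  · exact dif_neg hab
  obtain ⟨ha, hb⟩ := hab
  rw [s2_of_ne_zero ha hb]
  by_cases ht : t = 0
  · have hs : s ≠ 0 := by rintro rfl; simp [h, ht] at hb
    rw [show Units.mk0 b hb = Units.mk0 s hs * Units.mk0 s hs * 1 from
      Units.ext (by simp [h, ht, sq]), symbol_mul_self_mul_right, symbol_one_right]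
  by_cases hs : s = 0
  · rw [show Units.mk0 b hb = Units.mk0 t ht * Units.mk0 t ht * Units.mk0 a ha from
      Units.ext (by simp [h, hs, sq]), symbol_mul_self_mul_right, symbol_self]
  have hc : 1 + (t / s) ^ 2 * a ≠ 0 := by
    rw [show 1 + (t / s) ^ 2 * a = b / s ^ 2 by rw [h]; field_simp]
    exact div_ne_zero hb (pow_ne_zero 2 hs)
  have hr : t / s ≠ 0 := div_ne_zero ht hs
  rw [show Units.mk0 b hb = Units.mk0 s hs * Units.mk0 s hs * Units.mk0 _ hc from
      Units.ext (by simp only [h, Units.val_mul, Units.val_mk0]; field_simp),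
    symbol_mul_self_mul_right, ← symbol_mul_self_mul_left _ _ (Units.mk0 _ hr)]
  refine symbol_eq_zero_of_add_eq_one_s10 1 ?_
  simp only [Units.val_mul, Units.val_mk0]
  linear_combination (t / s) ^ 2 * a * CharTwo.two_eq_zero (R := F)

theorem exists_addMonoidHom_s2_eq_dlog_wedge (D₁ D₂ : Derivation ℤ F F) :
    ∃ ψ : KMod F 2 1 →+ F, ∀ a b : F,
      ψ (s2 1 a b) = (D₁ a * D₂ b - D₂ a * D₁ b) / (a * b) := by
  have hsteinberg (D : Derivation ℤ F F) {x y : F} (h : x + y = 1) : D y = -D x := by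
    rw [eq_neg_iff_add_eq_zero, add_comm, ← map_add, h, D.map_one_eq_zero]
  obtain ⟨ψ, hψ⟩ := exists_addMonoidHom_symbol
    (fun u v : Fˣ => (D₁ u * D₂ v - D₂ u * D₁ v) / (u * v))
    (fun u u' v => by
      simp only [Units.val_mul, Derivation.leibniz, smul_eq_mul]
      field_simp
      ring)
    (fun u v v' => by
      simp only [Units.val_mul, Derivation.leibniz, smul_eq_mul]
      field_simp
      ring)
    (fun u v h => by rw [hsteinberg D₁ h, hsteinberg D₂ h]; ring)
    CharTwo.add_self_eq_zero
  refine ⟨ψ, fun a b => ?_⟩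
  by_cases hab : a ≠ 0 ∧ b ≠ 0
  · rw [s2_of_ne_zero hab.1 hab.2, hψ]
    rfl
  · rw [s2, dif_neg hab, map_zero, eq_comm, div_eq_zero_iff, mul_eq_zero]
    right
    tauto

end CharTwo

end Milnor

namespace Subfield

variable {F : Type*} [Field F]

/-- `M + M x`; closed under inverses because `y⁻¹ = y * (y ^ 2)⁻¹` and `y ^ 2 ∈ M`. -/
def adjoinLinear (M : Subfield F) (hsq : ∀ z : F, z ^ 2 ∈ M) (x : F) : Subfield F where
  carrier := {y | ∃ p ∈ M, ∃ q ∈ M, y = p + q * x}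
  zero_mem' := ⟨0, M.zero_mem, 0, M.zero_mem, by ring⟩
  one_mem' := ⟨1, M.one_mem, 0, M.zero_mem, by ring⟩
  add_mem' := by
    rintro _ _ ⟨p, hp, q, hq, rfl⟩ ⟨p', hp', q', hq', rfl⟩
    exact ⟨p + p', M.add_mem hp hp', q + q', M.add_mem hq hq', by ring⟩
  neg_mem' := by
    rintro _ ⟨p, hp, q, hq, rfl⟩
    exact ⟨-p, M.neg_mem hp, -q, M.neg_mem hq, by ring⟩
  mul_mem' := by
    rintro _ _ ⟨p, hp, q, hq, rfl⟩ ⟨p', hp', q', hq', rfl⟩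
    exact ⟨p * p' + q * q' * x ^ 2, M.add_mem (M.mul_mem hp hp')
        (M.mul_mem (M.mul_mem hq hq') (hsq x)),
      p * q' + q * p', M.add_mem (M.mul_mem hp hq') (M.mul_mem hq hp'), by ring⟩
  inv_mem' := by
    rintro y ⟨p, hp, q, hq, rfl⟩
    have hinv : ((p + q * x) ^ 2)⁻¹ ∈ M := M.inv_mem (hsq _)
    refine ⟨p * ((p + q * x) ^ 2)⁻¹, M.mul_mem hp hinv, q * ((p + q * x) ^ 2)⁻¹,
      M.mul_mem hq hinv, ?_⟩
    by_cases hy : p + q * x = 0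
    · simp [hy]
    · field_simp

theorem self_mem_adjoinLinear (M : Subfield F) (hsq : ∀ z : F, z ^ 2 ∈ M) (x : F) :
    x ∈ M.adjoinLinear hsq x :=
  ⟨0, M.zero_mem, 1, M.one_mem, by ring⟩

theorem le_adjoinLinear (M : Subfield F) (hsq : ∀ z : F, z ^ 2 ∈ M) (x : F) :
    M ≤ M.adjoinLinear hsq x :=
  fun y hy => ⟨y, hy, 0, M.zero_mem, by ring⟩

theorem exists_le_forall_eq_add_mul (K : Subfield F) (hsq : ∀ z : F, z ^ 2 ∈ K) {a : F}
    (ha : a ∉ K) : ∃ M : Subfield F, K ≤ M ∧ a ∉ M ∧ ∀ x, ∃ p ∈ M, ∃ q ∈ M, x = p + q * a := by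
  obtain ⟨M, -, hM⟩ := zorn_le_nonempty₀ {M : Subfield F | K ≤ M ∧ a ∉ M}
    (fun c hc hchain y hy => by
      refine ⟨sSup c, ⟨(hc hy).1.trans (le_sSup hy), fun haS => ?_⟩, fun z hz => le_sSup hz⟩
      obtain ⟨s, hs, has⟩ := (mem_sSup_of_directedOn ⟨y, hy⟩ hchain.directedOn).1 haS
      exact (hc hs).2 has) K ⟨le_rfl, ha⟩
  obtain ⟨hKM, haM⟩ := hM.prop
  refine ⟨M, hKM, haM, fun x => ?_⟩
  by_cases hx : x ∈ M
  · exact ⟨x, hx, 0, M.zero_mem, by ring⟩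
  have hsqM : ∀ z : F, z ^ 2 ∈ M := fun z => hKM (hsq z)
  have hax : a ∈ M.adjoinLinear hsqM x := by
    by_contra hax
    exact hx (hM.le_of_ge ⟨hKM.trans (le_adjoinLinear M hsqM x), hax⟩
      (le_adjoinLinear M hsqM x) (self_mem_adjoinLinear M hsqM x))
  obtain ⟨p, hp, q, hq, rfl⟩ := hax
  have hq0 : q ≠ 0 := by
    rintro rfl
    exact haM (by simpa using hp)
  refine ⟨-(p * q⁻¹), M.neg_mem (M.mul_mem hp (M.inv_mem hq)), q⁻¹, M.inv_mem hq, ?_⟩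
  field_simp
  ring

theorem exists_derivation_of_forall_eq_add_mul [CharP F 2] (M : Subfield F) {a : F}
    (ha2 : a ^ 2 ∈ M) (ha : a ∉ M) (hspan : ∀ x, ∃ p ∈ M, ∃ q ∈ M, x = p + q * a) :
    ∃ D : Derivation ℤ F F, (∀ x ∈ M, D x = 0) ∧ D a = 1 := by
  choose p hp q hq hx using hspan
  have huniq : ∀ x p' q', p' ∈ M → q' ∈ M → x = p' + q' * a → q x = q' := by
    intro x p' q' hp' hq' hx'
    by_contra hne
    have hsub : q x - q' ≠ 0 := sub_ne_zero.2 hne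
    refine ha ?_
    rw [show a = (p' - p x) / (q x - q') by
      field_simp
      linear_combination hx' - hx x]
    exact M.div_mem (M.sub_mem hp' (hp x)) (M.sub_mem (hq x) hq')
  let D₀ : F →+ F := AddMonoidHom.mk' q fun x y =>
    huniq _ _ _ (M.add_mem (hp x) (hp y)) (M.add_mem (hq x) (hq y))
      (by linear_combination hx x + hx y)
  refine ⟨Derivation.mk' D₀.toIntLinearMap fun x y => ?_, fun x hxM => ?_, ?_⟩
  · show q (x * y) = x * q y + y * q x
    rw [huniq (x * y) (p x * p y + q x * q y * a ^ 2) (p x * q y + q x * p y)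
      (M.add_mem (M.mul_mem (hp x) (hp y)) (M.mul_mem (M.mul_mem (hq x) (hq y)) ha2))
      (M.add_mem (M.mul_mem (hp x) (hq y)) (M.mul_mem (hq x) (hp y)))
      (by linear_combination y * hx x + (p x + q x * a) * hx y)]
    linear_combination (-q y) * hx x - q x * hx y - q x * q y * a * CharTwo.two_eq_zero (R := F)
  · exact huniq x x 0 hxM M.zero_mem (by ring)
  · exact huniq a 0 1 M.zero_mem M.one_mem (by ring)

theorem exists_derivation_eq_zero_of_notMem [CharP F 2] (K : Subfield F)
    (hsq : ∀ z : F, z ^ 2 ∈ K) {a : F} (ha : a ∉ K) :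
    ∃ D : Derivation ℤ F F, (∀ x ∈ K, D x = 0) ∧ D a = 1 := by
  obtain ⟨M, hKM, haM, hspan⟩ := exists_le_forall_eq_add_mul K hsq ha
  obtain ⟨D, hDM, hDa⟩ := exists_derivation_of_forall_eq_add_mul M (hKM (hsq a)) haM hspan
  exact ⟨D, fun x hx => hDM x (hKM hx), hDa⟩

end Subfield

section SqAdjoin

variable {F : Type*} [Field F]

theorem sq_mem_sqAdjoin (S : Set F) (y : F) : y ^ 2 ∈ sqAdjoin F S :=
  Subfield.subset_closure (Or.inl ⟨y, rfl⟩)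

theorem subset_sqAdjoin (S : Set F) : S ⊆ sqAdjoin F S :=
  fun _ hx => Subfield.subset_closure (Or.inr hx)

theorem sqAdjoin_le_sqAdjoin_iff {S T : Set F} :
    sqAdjoin F S ≤ sqAdjoin F T ↔ S ⊆ sqAdjoin F T :=
  ⟨fun h => (subset_sqAdjoin S).trans h, fun h => Subfield.closure_le.2
    (Set.union_subset (by rintro _ ⟨y, rfl⟩; exact sq_mem_sqAdjoin T y) h)⟩

theorem sqAdjoin_union (S T : Set F) : sqAdjoin F (S ∪ T) = sqAdjoin F S ⊔ sqAdjoin F T := by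
  rw [sqAdjoin, sqAdjoin, sqAdjoin, ← Subfield.closure_union, Set.union_union_distrib_left]

theorem sqAdjoin_singleton_le [CharP F 2] (a : F) :
    sqAdjoin F {a} ≤ (frobenius F 2).fieldRange.adjoinLinear (fun z => ⟨z, rfl⟩) a := by
  refine Subfield.closure_le.2 (Set.union_subset ?_ ?_)
  · rintro _ ⟨y, rfl⟩
    exact Subfield.le_adjoinLinear _ _ a ⟨y, rfl⟩
  · rintro _ rfl
    exact Subfield.self_mem_adjoinLinear _ _ _

theorem s2_eq_zero_of_mem_sqAdjoin_singleton [CharP F 2] {a b : F}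
    (hb : b ∈ sqAdjoin F {a}) : s2 1 a b = 0 := by
  obtain ⟨_, ⟨s, rfl⟩, _, ⟨t, rfl⟩, hst⟩ := sqAdjoin_singleton_le a hb
  exact s2_eq_zero_of_eq_sq_add_sq_mul s t hst

theorem mem_sqAdjoin_of_s2_eq [CharP F 2] {a b a' b' : F} (heq : s2 1 a b = s2 1 a' b')
    (h0 : s2 1 a b ≠ 0) : a ∈ sqAdjoin F {a', b'} := by
  obtain ⟨ha, hb⟩ := ne_zero_of_s2_ne_zero h0
  by_contra haS
  have hbS : b ∉ sqAdjoin F {a} := fun h => h0 (s2_eq_zero_of_mem_sqAdjoin_singleton h)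
  obtain ⟨D₁, hD₁, hD₁a⟩ :=
    Subfield.exists_derivation_eq_zero_of_notMem _ (sq_mem_sqAdjoin _) haS
  obtain ⟨D₂, hD₂, hD₂b⟩ :=
    Subfield.exists_derivation_eq_zero_of_notMem _ (sq_mem_sqAdjoin _) hbS
  obtain ⟨ψ, hψ⟩ := exists_addMonoidHom_s2_eq_dlog_wedge D₁ D₂
  have hψ' : ψ (s2 1 a' b') = 0 := by
    rw [hψ, hD₁ a' (subset_sqAdjoin _ (by simp)), hD₁ b' (subset_sqAdjoin _ (by simp))]
    ring
  rw [← heq, hψ, hD₁a, hD₂b, hD₂ a (subset_sqAdjoin _ rfl)] at hψ'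
  simp [ha, hb] at hψ'

theorem sqAdjoin_pair_le_of_s2_eq [CharP F 2] {a b a' b' : F} (heq : s2 1 a b = s2 1 a' b')
    (h0 : s2 1 a b ≠ 0) : sqAdjoin F {a, b} ≤ sqAdjoin F {a', b'} := by
  rw [sqAdjoin_le_sqAdjoin_iff, Set.insert_subset_iff, Set.singleton_subset_iff]
  refine ⟨mem_sqAdjoin_of_s2_eq heq h0, ?_⟩
  rw [Set.pair_comm]
  exact mem_sqAdjoin_of_s2_eq (by rwa [s2_comm a b, s2_comm a' b']) (by rwa [s2_comm a b])

theorem sqAdjoin_pair_eq_of_s2_eq [CharP F 2] {a b a' b' : F} (heq : s2 1 a b = s2 1 a' b')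
    (h0 : s2 1 a b ≠ 0) : sqAdjoin F {a, b} = sqAdjoin F {a', b'} :=
  le_antisymm (sqAdjoin_pair_le_of_s2_eq heq h0) (sqAdjoin_pair_le_of_s2_eq heq.symm (heq ▸ h0))

end SqAdjoin

theorem stmt10_general (F : Type*) [Field F] [CharP F 2] (a b c d a' b' c' d' : F)
    (hab : s2 1 a b = s2 1 a' b') (hab0 : s2 1 a b ≠ (0 : KMod F 2 1))
    (hcd : s2 1 c d = s2 1 c' d') (hcd0 : s2 1 c d ≠ (0 : KMod F 2 1)) :
    sqAdjoin F {a, b} = sqAdjoin F {a', b'} ∧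
      sqAdjoin F {c, d} = sqAdjoin F {c', d'} ∧
      sqAdjoin F {a, b, c, d} = sqAdjoin F {a', b', c', d'} := by
  have e₁ := sqAdjoin_pair_eq_of_s2_eq hab hab0
  have e₂ := sqAdjoin_pair_eq_of_s2_eq hcd hcd0
  have hunion (x y z w : F) : ({x, y, z, w} : Set F) = {x, y} ∪ {z, w} := by
    simp only [Set.insert_union, Set.singleton_union]
  refine ⟨e₁, e₂, ?_⟩
  rw [hunion, hunion, sqAdjoin_union, sqAdjoin_union, e₁, e₂]

/-- equal nonzero symbols have equal value fields:
`F²(a,b) = F²(a',b')`, `F²(c,d) = F²(c',d')`, hence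
`F²(a,b,c,d) = F²(a',b',c',d')`. -/
theorem stmt10 (F : Type*) [Field F] [CharP F 2] (a b c d a' b' c' d' : F)
    (ha : a ≠ 0) (hb : b ≠ 0) (hc : c ≠ 0) (hd : d ≠ 0)
    (ha' : a' ≠ 0) (hb' : b' ≠ 0) (hc' : c' ≠ 0) (hd' : d' ≠ 0)
    (hab : s2 1 a b = s2 1 a' b') (hab0 : s2 1 a b ≠ (0 : KMod F 2 1))
    (hcd : s2 1 c d = s2 1 c' d') (hcd0 : s2 1 c d ≠ (0 : KMod F 2 1)) :
    sqAdjoin F {a, b} = sqAdjoin F {a', b'} ∧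
      sqAdjoin F {c, d} = sqAdjoin F {c', d'} ∧
      sqAdjoin F {a, b, c, d} = sqAdjoin F {a', b', c', d'} :=
  stmt10_general F a b c d a' b' c' d' hab hab0 hcd hcd0
end
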